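/- For all integers k ≥ 2 and n ≥ 2 − k, the k-generalized Pell number satisfies |P_n^(k) − g_k(γ) γ^n| < 1/2, where γ = γ(k) is the dominant root and g_k(z) = (z−1)/((k+1)z^2 − 3kz + k − 1). -/

import Mathlib

/-!
Since `(X - 1) Φ_k = X ^ (k + 1) - 3 X ^ k + X ^ (k - 1) + 1`, a root `γ > 1` satisfies
`γ ^ (k - 1) (γ ^ 2 - 3 γ + 1) = -1`, whence `2 < γ < 3`. Both `P` and `n ↦ γ ^ n` satisfy the
recurrence of order `k + 1` with characteristic polynomial `(X - 1) Φ_k`. Dividing it by `X - γ`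
leaves `X ^ k - ∑ w_i X ^ (k - 1 - i)` with `w_0 = 3 - γ`, `w_(j+1) = -(γ ^ 2 - 3 γ + 1) γ ^ j`:
nonnegative weights, summing to `1` because `X = 1` is a root. The residual of
`E_n = P_n - g_k(γ) γ ^ n` for this shorter recurrence is multiplied by `γ` at each step, and
`g_k(γ)` is exactly the coefficient making it vanish at `n = 2`. So each `E_n` is a convex
combination of earlier ones, and `|E_n|` stays below its maximum over the window `2 - k ≤ n ≤ 1`,
namely `max (g_k(γ)) |1 - g_k(γ) γ| < 1 / 2`.
-/

/-- `IsGenPell k P` says that `P : ℤ → ℤ` is the k-generalized Pell sequence. -/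
def IsGenPell (k : ℕ) (P : ℤ → ℤ) : Prop :=
  (∀ n : ℤ, 2 - (k : ℤ) ≤ n → n ≤ 0 → P n = 0) ∧ P 1 = 1 ∧
    ∀ n : ℤ, 2 ≤ n → P n = 2 * P (n - 1) + ∑ i ∈ Finset.Icc 2 k, P (n - (i : ℤ))

/-- Φ_k(x), the characteristic polynomial of the k-generalized Pell sequence. -/
noncomputable def Phi (k : ℕ) (x : ℝ) : ℝ :=
  x ^ k - 2 * x ^ (k - 1) - ∑ i ∈ Finset.range (k - 1), x ^ i

open Finset

theorem sub_one_mul_Phi {k : ℕ} (hk : 1 ≤ k) (x : ℝ) :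
    (x - 1) * Phi k x = x ^ (k - 1) * (x ^ 2 - 3 * x + 1) + 1 := by
  obtain ⟨K, rfl⟩ : ∃ K, k = K + 1 := ⟨k - 1, by omega⟩
  have hgeom := geom_sum_mul x K
  simp only [Phi, Nat.add_sub_cancel] at hgeom ⊢
  linear_combination -hgeom

section PhiRoot

variable {k : ℕ} {γ : ℝ}

theorem pow_mul_eq_neg_one_of_Phi_eq_zero (hk : 1 ≤ k) (hγ : Phi k γ = 0) :
    γ ^ (k - 1) * (γ ^ 2 - 3 * γ + 1) = -1 := by
  linear_combination (sub_one_mul_Phi hk γ).symm + (γ - 1) * hγ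

theorem geom_sum_eq_of_Phi_eq_zero (hγ : Phi k γ = 0) :
    ∑ i ∈ range (k - 1), γ ^ i = γ ^ (k - 1) * (γ - 2) := by
  unfold Phi at hγ
  rcases k with _ | k
  · norm_num at hγ
  · rw [pow_succ'] at hγ
    simp only [Nat.add_sub_cancel] at hγ ⊢
    linear_combination -hγ

theorem two_lt_of_Phi_eq_zero (hk : 2 ≤ k) (hγ₀ : 0 < γ) (hγ : Phi k γ = 0) : 2 < γ := by
  have hsum : 0 < ∑ i ∈ range (k - 1), γ ^ i :=
    sum_pos (fun i _ ↦ pow_pos hγ₀ i) ⟨0, mem_range.2 (by omega)⟩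
  rw [geom_sum_eq_of_Phi_eq_zero hγ] at hsum
  exact sub_pos.1 (pos_of_mul_pos_right hsum (pow_pos hγ₀ _).le)

theorem sq_sub_three_mul_add_one_neg (hk : 1 ≤ k) (hγ₀ : 0 < γ) (hγ : Phi k γ = 0) :
    γ ^ 2 - 3 * γ + 1 < 0 := by
  have key := pow_mul_eq_neg_one_of_Phi_eq_zero hk hγ
  have := pow_pos hγ₀ (k - 1)
  nlinarith

theorem neg_one_lt_mul_sq_sub_three_mul_add_one (hk : 2 ≤ k) (hγ₀ : 0 < γ) (hγ : Phi k γ = 0) :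
    -1 < k * (γ ^ 2 - 3 * γ + 1) := by
  have key := pow_mul_eq_neg_one_of_Phi_eq_zero (by omega) hγ
  have hs := sq_sub_three_mul_add_one_neg (by omega) hγ₀ hγ
  have hk_le : (k : ℝ) ≤ 2 ^ (k - 1) := by
    have := Nat.lt_two_pow_self (n := k - 1)
    exact_mod_cast (by omega : k ≤ 2 ^ (k - 1))
  have hpow : (2 : ℝ) ^ (k - 1) < γ ^ (k - 1) :=
    pow_lt_pow_left₀ (two_lt_of_Phi_eq_zero hk hγ₀ hγ) zero_le_two (by omega)
  nlinarith

theorem zpow_add_one_eq_three_mul_sub (hk : 1 ≤ k) (hγ₀ : γ ≠ 0) (hγ : Phi k γ = 0)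
    (m : ℤ) : γ ^ (m + 1) = 3 * γ ^ m - γ ^ (m - 1) - γ ^ (m - k) := by
  have key := pow_mul_eq_neg_one_of_Phi_eq_zero hk hγ
  have h₁ : γ ^ (m - 1) = γ ^ (m - k) * γ ^ (k - 1) := by
    rw [← zpow_natCast, ← zpow_add₀ hγ₀]
    congr 1
    omega
  have h₀ : γ ^ m = γ ^ (m - 1) * γ := by rw [← zpow_add_one₀ hγ₀, sub_add_cancel]
  rw [zpow_add_one₀ hγ₀, h₀, h₁]
  linear_combination γ ^ (m - k) * key

end PhiRoot

theorem abs_le_of_convex_recurrence {N : ℕ} {w : ℕ → ℝ} (hw₀ : ∀ i ∈ range N, 0 ≤ w i)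
    (hw₁ : ∑ i ∈ range N, w i = 1) {e : ℤ → ℝ} {m₀ : ℤ}
    (hrec : ∀ m, m₀ ≤ m → e m = ∑ i ∈ range N, w i * e (m - 1 - i)) {M : ℝ}
    (hinit : ∀ l, m₀ - N ≤ l → l < m₀ → |e l| ≤ M) {n : ℤ} (hn : m₀ - N ≤ n) :
    |e n| ≤ M := by
  suffices h : ∀ n, m₀ - 1 ≤ n → ∀ l, m₀ - N ≤ l → l ≤ n → |e l| ≤ M from
    h (max n (m₀ - 1)) (le_max_right _ _) n hn (le_max_left _ _)
  intro n hn
  induction n, hn using Int.leInduction with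
  | base => exact fun l hl₁ hl₂ ↦ hinit l hl₁ (by omega)
  | succ n hn ih => ?_
  intro l hl₁ hl₂
  rcases lt_or_eq_of_le hl₂ with hl | rfl
  · exact ih l hl₁ (by omega)
  rcases lt_or_ge (n + 1) m₀ with hlt | hge
  · exact hinit _ hl₁ hlt
  calc |e (n + 1)| = |∑ i ∈ range N, w i * e (n + 1 - 1 - i)| := by rw [← hrec _ hge]
    _ ≤ ∑ i ∈ range N, w i * M := by
      refine (abs_sum_le_sum_abs _ _).trans (sum_le_sum fun i hi ↦ ?_)
      rw [abs_mul, abs_of_nonneg (hw₀ i hi)]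
      exact mul_le_mul_of_nonneg_left (ih _ (by simp at hi; omega) (by omega)) (hw₀ i hi)
    _ = M := by rw [← sum_mul, hw₁, one_mul]

noncomputable def pellWeight (γ : ℝ) : ℕ → ℝ
  | 0 => 3 - γ
  | j + 1 => -(γ ^ 2 - 3 * γ + 1) * γ ^ j

theorem sum_range_succ_pellWeight_mul (γ : ℝ) (K : ℕ) (f : ℕ → ℝ) :
    ∑ i ∈ range (K + 1), pellWeight γ i * f i =
      (3 - γ) * f 0 - (γ ^ 2 - 3 * γ + 1) * ∑ j ∈ range K, γ ^ j * f (j + 1) := by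
  rw [sum_range_succ', add_comm, mul_sum, sub_eq_add_neg, ← sum_neg_distrib]
  simp only [pellWeight, mul_assoc, neg_mul]

section Weights

variable {k : ℕ} {γ : ℝ}

theorem pellWeight_nonneg (hγ₀ : 0 ≤ γ) (hγ₃ : γ ≤ 3) (hs : γ ^ 2 - 3 * γ + 1 ≤ 0) :
    ∀ i, 0 ≤ pellWeight γ i
  | 0 => sub_nonneg.2 hγ₃
  | j + 1 => mul_nonneg (neg_nonneg.2 hs) (pow_nonneg hγ₀ j)

theorem sum_pellWeight (hk : 1 ≤ k) (hγ : Phi k γ = 0) : ∑ i ∈ range k, pellWeight γ i = 1 := by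
  have key := pow_mul_eq_neg_one_of_Phi_eq_zero hk hγ
  have hgeom := geom_sum_eq_of_Phi_eq_zero hγ
  obtain ⟨K, rfl⟩ : ∃ K, k = K + 1 := ⟨k - 1, by omega⟩
  simp only [Nat.add_sub_cancel] at key hgeom
  have h := sum_range_succ_pellWeight_mul γ K fun _ ↦ 1
  simp only [mul_one, hgeom] at h
  linear_combination h - (γ - 2) * key

noncomputable def pellResidual (k : ℕ) (γ : ℝ) (e : ℤ → ℝ) (m : ℤ) : ℝ :=
  e m - ∑ i ∈ range k, pellWeight γ i * e (m - 1 - i)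

theorem pellResidual_add_one_sub_mul (hk : 1 ≤ k) (hγ : Phi k γ = 0) (e : ℤ → ℝ) (m : ℤ) :
    pellResidual k γ e (m + 1) - γ * pellResidual k γ e m =
      e (m + 1) - 3 * e m + e (m - 1) + e (m - k) := by
  have key := pow_mul_eq_neg_one_of_Phi_eq_zero hk hγ
  obtain ⟨K, rfl⟩ : ∃ K, k = K + 1 := ⟨k - 1, by omega⟩
  simp only [Nat.add_sub_cancel] at key
  have htel := sum_range_sub' (fun j : ℕ ↦ γ ^ j * e (m - 1 - j)) K
  have hshift : γ * ∑ j ∈ range K, γ ^ j * e (m - 1 - (j + 1)) =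
      ∑ j ∈ range K, γ ^ (j + 1) * e (m - 1 - (j + 1)) := by
    rw [mul_sum]
    exact sum_congr rfl fun j _ ↦ by ring
  rw [sum_sub_distrib] at htel
  simp only [pellResidual, sum_range_succ_pellWeight_mul]
  push_cast at htel ⊢
  simp only [add_sub_cancel_right, sub_zero, pow_zero, one_mul,
    show ∀ x : ℤ, m - (x + 1) = m - 1 - x from fun x ↦ by ring] at htel ⊢
  linear_combination (γ ^ 2 - 3 * γ + 1) * (htel - hshift) - e (m - 1 - K) * key

end Weights

/-- The coefficient `g_k(z)`. -/
noncomputable def dominantCoeff (k : ℕ) (z : ℝ) : ℝ :=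
  (z - 1) / ((k + 1) * z ^ 2 - 3 * k * z + k - 1)

section DominantCoeff

variable {k : ℕ} {γ : ℝ}

-- The denominator is `(k + 1) * (γ ^ 2 - 3 * γ + 1) + 3 * γ - 2`.
theorem dominantCoeff_denom_bounds (hγ : 2 < γ) (hs : γ ^ 2 - 3 * γ + 1 < 0)
    (hks : -1 < k * (γ ^ 2 - 3 * γ + 1)) :
    3 * γ - 4 < (k + 1) * γ ^ 2 - 3 * k * γ + k - 1 ∧
      (k + 1) * γ ^ 2 - 3 * k * γ + k - 1 < 3 * γ - 2 := by
  constructor <;> nlinarith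

theorem dominantCoeff_pos (hγ : 2 < γ) (hs : γ ^ 2 - 3 * γ + 1 < 0)
    (hks : -1 < k * (γ ^ 2 - 3 * γ + 1)) : 0 < dominantCoeff k γ :=
  div_pos (by linarith) (by linarith [(dominantCoeff_denom_bounds hγ hs hks).1])

theorem dominantCoeff_lt_half (hγ : 2 < γ) (hs : γ ^ 2 - 3 * γ + 1 < 0)
    (hks : -1 < k * (γ ^ 2 - 3 * γ + 1)) : dominantCoeff k γ < 1 / 2 := by
  have hD := (dominantCoeff_denom_bounds hγ hs hks).1
  rw [dominantCoeff, div_lt_iff₀ (by linarith)]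
  linarith

theorem abs_one_sub_dominantCoeff_mul_lt_half (hγ : 2 < γ) (hs : γ ^ 2 - 3 * γ + 1 < 0)
    (hks : -1 < k * (γ ^ 2 - 3 * γ + 1)) : |1 - dominantCoeff k γ * γ| < 1 / 2 := by
  obtain ⟨hD₁, hD₂⟩ := dominantCoeff_denom_bounds hγ hs hks
  have hD₀ : 0 < (k + 1) * γ ^ 2 - 3 * k * γ + k - 1 := by linarith
  rw [dominantCoeff, div_mul_eq_mul_div, abs_sub_lt_iff]
  constructor
  · rw [sub_lt_comm, lt_div_iff₀ hD₀]
    nlinarith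
  · rw [sub_lt_iff_lt_add, div_lt_iff₀ hD₀]
    nlinarith

end DominantCoeff

section GenPell

variable {k : ℕ} {P : ℤ → ℤ}

theorem IsGenPell.eq_sum_range (hP : IsGenPell k P) {n : ℤ} (hn : 2 ≤ n) :
    P n = 2 * P (n - 1) + ∑ j ∈ range (k - 1), P (n - 2 - j) := by
  rw [hP.2.2 n hn, ← Ico_add_one_right_eq_Icc, sum_Ico_eq_sum_range]
  congr 1
  refine sum_congr rfl fun j _ ↦ congrArg P ?_
  push_cast
  ring

theorem IsGenPell.two (hP : IsGenPell k P) : P 2 = 2 := by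
  rw [hP.2.2 2 le_rfl, show (2 : ℤ) - 1 = 1 by norm_num, hP.2.1,
    sum_eq_zero fun i hi ↦ hP.1 _ (by simp at hi; omega) (by simp at hi; omega)]
  rfl

theorem IsGenPell.add_one_eq_three_mul_sub (hP : IsGenPell k P) (hk : 1 ≤ k) {m : ℤ}
    (hm : 2 ≤ m) : P (m + 1) = 3 * P m - P (m - 1) - P (m - k) := by
  have h₁ := hP.eq_sum_range (n := m + 1) (by omega)
  have h₀ := hP.eq_sum_range hm
  have htel := sum_range_sub' (fun j : ℕ ↦ P (m - 1 - j)) (k - 1)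
  rw [sum_sub_distrib] at htel
  simp only [add_sub_cancel_right, show m + 1 - 2 = m - 1 by ring] at h₁
  push_cast at htel
  simp only [sub_zero, show ∀ x : ℤ, m - 1 - (x + 1) = m - 2 - x from fun x ↦ by ring,
    show m - 1 - ((k - 1 : ℕ) : ℤ) = m - k by omega] at htel
  linear_combination h₁ - h₀ + htel

noncomputable def pellError (k : ℕ) (P : ℤ → ℤ) (γ : ℝ) (m : ℤ) : ℝ :=
  P m - dominantCoeff k γ * γ ^ m

-- The residual at `2` is `γ - 1 - g_k(γ) * ((k + 1) * γ ^ 2 - 3 * k * γ + k - 1)`.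
theorem IsGenPell.pellResidual_two {γ : ℝ} (hP : IsGenPell k P) (hk : 1 ≤ k) (hγ₀ : γ ≠ 0)
    (hD : (k + 1) * γ ^ 2 - 3 * k * γ + k - 1 ≠ 0) :
    pellResidual k γ (pellError k P γ) 2 = 0 := by
  obtain ⟨K, rfl⟩ : ∃ K, k = K + 1 := ⟨k - 1, by omega⟩
  have hzero : ∀ j ∈ range K, γ ^ j * pellError (K + 1) P γ (2 - 1 - (j + 1 : ℕ)) =
      -dominantCoeff (K + 1) γ := by
    intro j hj
    simp only [mem_range] at hj
    rw [pellError, hP.1 _ (by omega) (by omega),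
      show (2 : ℤ) - 1 - (j + 1 : ℕ) = -j by push_cast; ring, zpow_neg, zpow_natCast, Int.cast_zero]
    field_simp
    ring
  have hc : dominantCoeff (K + 1) γ * ((K + 1 + 1) * γ ^ 2 - 3 * (K + 1) * γ + (K + 1) - 1) =
      γ - 1 := by
    rw [dominantCoeff]
    push_cast
    exact div_mul_cancel₀ _ (by exact_mod_cast hD)
  rw [pellResidual, sum_range_succ_pellWeight_mul, sum_congr rfl hzero]
  simp only [pellError, hP.two, sum_const, card_range, nsmul_eq_mul]
  norm_num [hP.2.1]
  linear_combination -hc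

theorem IsGenPell.pellResidual_eq_zero {γ : ℝ} (hP : IsGenPell k P) (hk : 1 ≤ k) (hγ₀ : γ ≠ 0)
    (hγ : Phi k γ = 0) (hD : (k + 1) * γ ^ 2 - 3 * k * γ + k - 1 ≠ 0) {m : ℤ} (hm : 2 ≤ m) :
    pellResidual k γ (pellError k P γ) m = 0 := by
  induction m, hm using Int.leInduction with
  | base => exact hP.pellResidual_two hk hγ₀ hD
  | succ m hm ih =>
    have hstep := pellResidual_add_one_sub_mul hk hγ (pellError k P γ) m
    have hPm : (P (m + 1) : ℝ) = 3 * P m - P (m - 1) - P (m - k) := by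
      exact_mod_cast hP.add_one_eq_three_mul_sub hk hm
    have hγm := zpow_add_one_eq_three_mul_sub hk hγ₀ hγ m
    simp only [pellError] at hstep
    linear_combination hstep + γ * ih + hPm - dominantCoeff k γ * hγm

theorem IsGenPell.abs_pellError_le {γ : ℝ} (hP : IsGenPell k P) (hγ : 1 ≤ γ)
    (hc : 0 ≤ dominantCoeff k γ) {l : ℤ} (hl₁ : 2 - k ≤ l) (hl₂ : l ≤ 1) :
    |pellError k P γ l| ≤ max (dominantCoeff k γ) |1 - dominantCoeff k γ * γ| := by
  rcases hl₂.lt_or_eq with hl | rfl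
  · have hpow : γ ^ l ≤ 1 := zpow_le_one_of_nonpos₀ hγ (by omega)
    rw [pellError, hP.1 l hl₁ (by omega), Int.cast_zero, zero_sub, abs_neg,
      abs_of_nonneg (mul_nonneg hc (zpow_nonneg (by linarith) l))]
    exact le_max_of_le_left (mul_le_of_le_one_right hc hpow)
  · simp only [pellError, hP.2.1, Int.cast_one, zpow_one]
    exact le_max_right _ _

end GenPell

/-- For k ≥ 2 and n ≥ 2 − k, |P_n^(k) − g_k(γ)γⁿ| < 1/2, where γ is the dominant
root and g_k(z) = (z−1)/((k+1)z² − 3kz + k − 1). -/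
theorem genPell_dominant_term (k : ℕ) (hk : 2 ≤ k) (P : ℤ → ℤ) (hP : IsGenPell k P)
    (γ : ℝ) (hγ1 : 1 < γ) (hγ : Phi k γ = 0) (n : ℤ) (hn : 2 - (k : ℤ) ≤ n) :
    |(P n : ℝ) - (γ - 1) / ((k + 1) * γ ^ 2 - 3 * k * γ + k - 1) * γ ^ n| < 1 / 2 := by
  have hγ₀ : 0 < γ := zero_lt_one.trans hγ1
  have hγ₂ := two_lt_of_Phi_eq_zero hk hγ₀ hγ
  have hs := sq_sub_three_mul_add_one_neg (by omega) hγ₀ hγ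
  have hks := neg_one_lt_mul_sq_sub_three_mul_add_one hk hγ₀ hγ
  have hD : 0 < (k + 1) * γ ^ 2 - 3 * k * γ + k - 1 := by
    linarith [(dominantCoeff_denom_bounds hγ₂ hs hks).1]
  have hc := dominantCoeff_pos hγ₂ hs hks
  have hγ₃ : γ ≤ 3 := by nlinarith
  calc |(P n : ℝ) - (γ - 1) / ((k + 1) * γ ^ 2 - 3 * k * γ + k - 1) * γ ^ n|
      = |pellError k P γ n| := rfl
    _ ≤ max (dominantCoeff k γ) |1 - dominantCoeff k γ * γ| :=
      abs_le_of_convex_recurrence (N := k) (w := pellWeight γ) (e := pellError k P γ) (m₀ := 2)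
        (fun i _ ↦ pellWeight_nonneg hγ₀.le hγ₃ hs.le i)
        (sum_pellWeight (by omega) hγ)
        (fun m hm ↦ sub_eq_zero.1 (hP.pellResidual_eq_zero (by omega) hγ₀.ne' hγ hD.ne' hm))
        (fun l hl₁ hl₂ ↦ hP.abs_pellError_le hγ1.le hc.le hl₁ (by omega)) hn
    _ < 1 / 2 :=
      max_lt (dominantCoeff_lt_half hγ₂ hs hks) (abs_one_sub_dominantCoeff_mul_lt_half hγ₂ hs hks)
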